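/- arXiv:1401.0475 — 2 statements merged into one kernel-verified Lean document; each statement's English description precedes it below -/
import Mathlib

section
/- Let a < b be real numbers and let V be a linear subspace of the space of functions ℝ → ℝ such that every element of V is continuously differentiable (C¹). Let D be a map from functions ℝ → ℝ to functions ℝ → ℝ such that D maps V into V and for all u, w ∈ V, ∫_a^b (D u)(x) w(x) dx = ∫_a^b u′(x) w(x) dx. Let k be a natural number and let φ : ℝ → ℝ be an infinitely differentiable function whose support is compact and contained in the open interval (a, b), and suppose that the j-th derivative φ^{(j)} belongs to V for every j ≤ k. Then for every u ∈ V, ∫_a^b (D^k u)(x) φ(x) dx = (−1)^k ∫_a^b u(x) φ^{(k)}(x) dx, where D^k denotes the k-fold iterate of D. -/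
lemma tsupport_iteratedDeriv_subset' (φ : ℝ → ℝ) (k : ℕ) :
    tsupport (iteratedDeriv k φ) ⊆ tsupport φ := by
  induction k with
  | zero => simp [iteratedDeriv_zero]
  | succ n ih =>
    rw [iteratedDeriv_succ]
    exact (closure_minimal ((support_deriv_subset).trans
      (subset_trans (by exact fun x hx => hx) ih)) isClosed_closure)

theorem iterated_ultrafunction_derivative
    (a b : ℝ) (hab : a < b) (V : Submodule ℝ (ℝ → ℝ))
    (hV : ∀ f ∈ V, ContDiff ℝ 1 f)
    (D : (ℝ → ℝ) → (ℝ → ℝ))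
    (hDmem : ∀ u ∈ V, D u ∈ V)
    (hDdef : ∀ u ∈ V, ∀ w ∈ V,
      ∫ x in a..b, D u x * w x = ∫ x in a..b, deriv u x * w x)
    (k : ℕ) (φ : ℝ → ℝ) (hφ : ContDiff ℝ (⊤ : ℕ∞) φ) (hφc : HasCompactSupport φ)
    (hφsupp : tsupport φ ⊆ Set.Ioo a b)
    (hφV : ∀ j ≤ k, iteratedDeriv j φ ∈ V) :
    ∀ u ∈ V, ∫ x in a..b, (D^[k] u) x * φ x =
      (-1 : ℝ) ^ k * ∫ x in a..b, u x * iteratedDeriv k φ x := by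
  induction k with
  | zero => intro u hu; simp
  | succ k ih =>
    intro u hu
    have hDu : D u ∈ V := hDmem u hu
    have hψV : iteratedDeriv k φ ∈ V := hφV k (Nat.le_succ k)
    -- step 1: apply IH to D u
    have h1 : ∫ x in a..b, (D^[k+1] u) x * φ x =
        (-1 : ℝ) ^ k * ∫ x in a..b, D u x * iteratedDeriv k φ x := by
      rw [Function.iterate_succ_apply]
      exact ih (fun j hj => hφV j (hj.trans (Nat.le_succ k))) (D u) hDu
    rw [h1, hDdef u hu _ hψV]
    -- step 2: integration by parts
    set ψ := iteratedDeriv k φ with hψdef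
    have hucd : ContDiff ℝ 1 u := hV u hu
    have hψcd : ContDiff ℝ (⊤ : ℕ∞) ψ := by
      rw [hψdef, iteratedDeriv_eq_iterate]
      exact ContDiff.iterate_deriv k (hφ.of_le (by simp))
    have hψsupp : tsupport ψ ⊆ Set.Ioo a b :=
      (tsupport_iteratedDeriv_subset' φ k).trans hφsupp
    have hψa : ψ a = 0 := by
      apply image_eq_zero_of_notMem_tsupport
      intro h; exact absurd (hψsupp h).1 (lt_irrefl a)
    have hψb : ψ b = 0 := by
      apply image_eq_zero_of_notMem_tsupport
      intro h; exact absurd (hψsupp h).2 (lt_irrefl b)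
    have hu' : ∀ x ∈ Set.uIcc a b, HasDerivAt u (deriv u x) x := fun x _ =>
      (hucd.differentiable one_ne_zero x).hasDerivAt
    have hψ' : ∀ x ∈ Set.uIcc a b, HasDerivAt ψ (deriv ψ x) x := fun x _ =>
      (hψcd.differentiable (by simp) x).hasDerivAt
    have hcu' : Continuous (deriv u) := hucd.continuous_deriv le_rfl
    have hcψ' : Continuous (deriv ψ) := hψcd.continuous_deriv (by exact_mod_cast le_top)
    have hparts := intervalIntegral.integral_deriv_mul_eq_sub hu' hψ'
      (hcu'.intervalIntegrable a b) (hcψ'.intervalIntegrable a b)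
    rw [hψa, hψb, mul_zero, mul_zero, sub_zero] at hparts
    have hsplit : (∫ x in a..b, deriv u x * ψ x) + ∫ x in a..b, u x * deriv ψ x = 0 := by
      rw [← intervalIntegral.integral_add (f := fun x => deriv u x * ψ x) (g := fun x => u x * deriv ψ x)
        ((hcu'.mul hψcd.continuous).intervalIntegrable a b)
        ((hucd.continuous.mul hcψ').intervalIntegrable a b), hparts]
    have h2 : ∫ x in a..b, deriv u x * ψ x = - ∫ x in a..b, u x * deriv ψ x := by
      linarith
    rw [h2, ← iteratedDeriv_succ] at *
    ring
end

section
/- Let a < b be real numbers, let V be a finite-dimensional linear subspace of the space C([a, b], ℝ) of continuous real-valued functions on [a, b], and let Σ be a finite subset of [a, b]. Suppose δ : Σ → V is a family such that for every q ∈ Σ and every v ∈ V, ∫_{[a,b]} v(x) δ_q(x) dx = v(q), and suppose the family (δ_q)_{q ∈ Σ} is a basis of V. If u, v ∈ V satisfy u(q) = v(q) for every q ∈ Σ, then u = v. -/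
/-!
Put `w = u - v`. It lies in `V`, the span of the `δ q`, and is `L²`-orthogonal to every `δ q`
because `⟨w, δ q⟩ = w q = 0`; hence `⟨w, w⟩ = 0`. Since `a < b`, every nonempty open subset of
`[a, b]` has positive length, so a continuous function with vanishing `L²` norm is zero.
-/

attribute [local instance] MeasureTheory.Measure.Subtype.measureSpace

open MeasureTheory

theorem isOpenPosMeasure_comap_subtype_val {X : Type*} [TopologicalSpace X] [MeasurableSpace X]
    (μ : Measure X) [μ.IsOpenPosMeasure] {s : Set X} (hs : MeasurableSet s)
    (hs_dense : s ⊆ closure (interior s)) :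
    (μ.comap ((↑) : s → X)).IsOpenPosMeasure := by
  refine ⟨fun U hU ⟨x, hx⟩ => ?_⟩
  obtain ⟨O, hO, rfl⟩ := isOpen_induced_iff.mp hU
  have hne : (interior s ∩ O).Nonempty :=
    (closure_inter_open_nonempty_iff hO).mp ⟨x, hs_dense x.2, hx⟩
  rw [(MeasurableEmbedding.subtype_coe hs).comap_apply, Subtype.image_preimage_coe]
  exact fun h => (isOpen_interior.inter hO).measure_ne_zero μ hne
    (measure_mono_null (Set.inter_subset_inter_left O interior_subset) h)

theorem isOpenPosMeasure_volume_Icc {a b : ℝ} (hab : a < b) :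
    (volume : Measure (Set.Icc a b)).IsOpenPosMeasure := by
  rw [Measure.Subtype.volume_def]
  exact isOpenPosMeasure_comap_subtype_val volume measurableSet_Icc
    (by rw [interior_Icc, closure_Ioo hab.ne])

instance isFiniteMeasure_volume_Icc (a b : ℝ) : IsFiniteMeasure (volume : Measure (Set.Icc a b)) :=
  ⟨by simp [Measure.Subtype.volume_univ nullMeasurableSet_Icc]⟩

theorem ContinuousMap.eq_zero_of_mem_span_of_integral_mul_eq_zero {X : Type*}
    [TopologicalSpace X] [CompactSpace X] [MeasurableSpace X] [BorelSpace X]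
    (μ : Measure X) [IsFiniteMeasure μ] [μ.IsOpenPosMeasure] {s : Set C(X, ℝ)} {f : C(X, ℝ)}
    (hf : f ∈ Submodule.span ℝ s) (horth : ∀ g ∈ s, ∫ x, f x * g x ∂μ = 0) :
    f = 0 := by
  set T := (ContinuousMap.toLp 2 μ ℝ : C(X, ℝ) →L[ℝ] Lp ℝ 2 μ)
  have hT : T '' s ⊆ (ℝ ∙ T f)ᗮ := by
    rintro _ ⟨g, hg, rfl⟩
    rw [SetLike.mem_coe, Submodule.mem_orthogonal_singleton_iff_inner_left,
      ContinuousMap.inner_toLp]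
    simpa using horth g hg
  have hTf : T f ∈ (ℝ ∙ T f)ᗮ :=
    Submodule.span_le.mpr hT (Submodule.apply_mem_span_image_of_mem_span T.toLinearMap hf)
  rw [Submodule.mem_orthogonal_singleton_iff_inner_right, inner_self_eq_zero] at hTf
  exact ContinuousMap.toLp_injective μ (hTf.trans (map_zero T).symm)

theorem equal_on_independent_points_general
    (a b : ℝ) (hab : a < b) (V : Submodule ℝ C(Set.Icc a b, ℝ))
    (S : Finset (Set.Icc a b))
    (δ : Set.Icc a b → C(Set.Icc a b, ℝ))
    (hδ : ∀ q ∈ S, ∀ v ∈ V, ∫ x : Set.Icc a b, v x * δ q x = v q)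
    (hspan : Submodule.span ℝ (δ '' ↑S) = V)
    (u v : C(Set.Icc a b, ℝ)) (hu : u ∈ V) (hv : v ∈ V)
    (huv : ∀ q ∈ S, u q = v q) :
    u = v := by
  have := isOpenPosMeasure_volume_Icc hab
  have hmem : u - v ∈ Submodule.span ℝ (δ '' ↑S) := hspan ▸ sub_mem hu hv
  refine sub_eq_zero.mp (ContinuousMap.eq_zero_of_mem_span_of_integral_mul_eq_zero volume hmem ?_)
  rintro _ ⟨q, hq, rfl⟩
  rw [hδ q hq _ (sub_mem hu hv), ContinuousMap.sub_apply, huv q hq, sub_self]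

theorem equal_on_independent_points
    (a b : ℝ) (hab : a < b) (V : Submodule ℝ C(Set.Icc a b, ℝ))
    [FiniteDimensional ℝ V] (S : Finset (Set.Icc a b))
    (δ : Set.Icc a b → C(Set.Icc a b, ℝ))
    (hδV : ∀ q ∈ S, δ q ∈ V)
    (hδ : ∀ q ∈ S, ∀ v ∈ V, ∫ x : Set.Icc a b, v x * δ q x = v q)
    (hind : LinearIndependent ℝ (fun q : {q // q ∈ S} => δ q))
    (hspan : Submodule.span ℝ (δ '' ↑S) = V)
    (u v : C(Set.Icc a b, ℝ)) (hu : u ∈ V) (hv : v ∈ V)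
    (huv : ∀ q ∈ S, u q = v q) :
    u = v :=
  equal_on_independent_points_general a b hab V S δ hδ hspan u v hu hv huv
end
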